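/- arXiv:cs/0606087 — 2 statements merged into one kernel-verified Lean document; each statement's English description precedes it below -/
import Mathlib

section
/- Let (H, V) be a violator space of combinatorial dimension δ (every basis has at most δ elements) with |H| = n, and fix W ⊆ H. For a uniformly random r-element subset R ⊆ H with r < n, the expected number of elements h ∈ H \ (W ∪ R) with h ∈ V(W ∪ R) is at most δ(n − r)/(r + 1). -/
/-!
Backwards analysis. Pairs `(R, h)` with `|R| = r` and `h ∉ W ∪ R` violating `W ∪ R` correspond
to pairs `(Q, h)` with `|Q| = r + 1`, `h ∈ Q \ W` and `h ∈ V (W ∪ (Q \ {h}))`, via `Q = R ∪ {h}`.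
Such an `h` is extreme in `W ∪ Q`, i.e. lies in every basis of `W ∪ Q`, so each `Q` contributes at
most `δ` pairs. Hence the sum over `R` is at most `δ · C(n, r + 1) = δ · C(n, r) · (n - r) / (r + 1)`.
-/

open Finset

section

variable {α : Type*}

theorem Finset.exists_minimal_subset_eq (V : Finset α → Finset α) (G : Finset α) :
    ∃ B ⊆ G, V B = V G ∧ ∀ B' ⊂ B, V B' ≠ V G := by
  obtain ⟨B, ⟨hBG, hBV⟩, hmin⟩ :=
    exists_minimal_of_wellFoundedLT (fun B => B ⊆ G ∧ V B = V G) ⟨G, subset_refl G, rfl⟩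
  exact ⟨B, hBG, hBV, fun B' hB' hB'V =>
    hB'.2 (hmin ⟨hB'.1.trans hBG, hB'V⟩ hB'.1)⟩

variable [DecidableEq α]

theorem Finset.sum_powersetCard_card_filter_sdiff (H : Finset α) (r : ℕ)
    (P : Finset α → α → Prop) [∀ R, DecidablePred (P R)] :
    ∑ R ∈ H.powersetCard r, ((H \ R).filter (P R)).card
      = ∑ Q ∈ H.powersetCard (r + 1), (Q.filter fun h => P (Q.erase h) h).card := by
  rw [← card_sigma, ← card_sigma]
  refine card_nbij' (fun x => ⟨insert x.2 x.1, x.2⟩) (fun y => ⟨y.1.erase y.2, y.2⟩)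
    ?_ ?_ ?_ ?_
  · rintro ⟨R, h⟩ hx
    simp only [coe_sigma, Set.mem_sigma_iff, mem_coe, mem_powersetCard, mem_filter,
      mem_sdiff] at hx ⊢
    obtain ⟨⟨hRH, rfl⟩, ⟨hhH, hhR⟩, hP⟩ := hx
    exact ⟨⟨insert_subset hhH hRH, card_insert_of_notMem hhR⟩, mem_insert_self h R,
      by rwa [erase_insert hhR]⟩
  · rintro ⟨Q, h⟩ hy
    simp only [coe_sigma, Set.mem_sigma_iff, mem_coe, mem_powersetCard, mem_filter,
      mem_sdiff] at hy ⊢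
    obtain ⟨⟨hQH, hQ⟩, hhQ, hP⟩ := hy
    exact ⟨⟨(erase_subset h Q).trans hQH, by rw [card_erase_of_mem hhQ, hQ]; rfl⟩,
      ⟨hQH hhQ, notMem_erase h Q⟩, hP⟩
  · rintro ⟨R, h⟩ hx
    simp only [coe_sigma, Set.mem_sigma_iff, mem_coe, mem_filter, mem_sdiff] at hx
    simp [erase_insert hx.2.1.2]
  · rintro ⟨Q, h⟩ hy
    simp only [coe_sigma, Set.mem_sigma_iff, mem_coe, mem_filter] at hy
    simp [insert_erase hy.2.1]

structure IsViolatorSpace (H : Finset α) (V : Finset α → Finset α) : Prop where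
  consistency : ∀ G ⊆ H, G ∩ V G = ∅
  locality : ∀ F G, F ⊆ G → G ⊆ H → G ∩ V F = ∅ → V G = V F

def CombinatorialDimLE (H : Finset α) (V : Finset α → Finset α) (δ : ℕ) : Prop :=
  ∀ G ⊆ H, ∀ B ⊆ G, V B = V G → (∀ B' ⊂ B, V B' ≠ V G) → B.card ≤ δ

namespace IsViolatorSpace

variable {H : Finset α} {V : Finset α → Finset α}

theorem notMem_violator (hV : IsViolatorSpace H V) {G : Finset α} (hG : G ⊆ H) {h : α}
    (hh : h ∈ G) : h ∉ V G := fun hhV =>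
  notMem_empty h (hV.consistency G hG ▸ mem_inter_of_mem hh hhV)

theorem mem_of_mem_violator_erase (hV : IsViolatorSpace H V) {G B : Finset α} (hG : G ⊆ H)
    (hBG : B ⊆ G) (hBV : V B = V G) {h : α} (hhG : h ∈ G) (hh : h ∈ V (G.erase h)) :
    h ∈ B := by
  by_contra hhB
  have hBsub : B ⊆ G.erase h := fun x hx => mem_erase.2 ⟨fun e => hhB (e ▸ hx), hBG hx⟩
  have hdisj : G.erase h ∩ V B = ∅ := by
    rw [hBV, ← subset_empty, ← hV.consistency G hG]
    exact inter_subset_inter_right (erase_subset h G)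
  have hVerase : V (G.erase h) = V G :=
    (hV.locality B _ hBsub ((erase_subset h G).trans hG) hdisj).trans hBV
  exact hV.notMem_violator hG hhG (hVerase ▸ hh)

theorem card_filter_mem_violator_erase_le (hV : IsViolatorSpace H V) {δ : ℕ}
    (hdim : CombinatorialDimLE H V δ) {G : Finset α} (hG : G ⊆ H) :
    (G.filter fun h => h ∈ V (G.erase h)).card ≤ δ := by
  obtain ⟨B, hBG, hBV, hBmin⟩ := exists_minimal_subset_eq V G
  refine (card_le_card fun h hh => ?_).trans (hdim G hG B hBG hBV hBmin)
  rw [mem_filter] at hh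
  exact hV.mem_of_mem_violator_erase hG hBG hBV hh.1 hh.2

theorem card_filter_violator_erase_union_le (hV : IsViolatorSpace H V) {δ : ℕ}
    (hdim : CombinatorialDimLE H V δ) {W Q : Finset α} (hW : W ⊆ H) (hQ : Q ⊆ H) :
    (Q.filter fun h => h ∉ W ∧ h ∈ V (W ∪ Q.erase h)).card ≤ δ := by
  refine (card_le_card fun h hh => ?_).trans
    (hV.card_filter_mem_violator_erase_le hdim (union_subset hW hQ))
  rw [mem_filter] at hh ⊢
  obtain ⟨hhQ, hhW, hhV⟩ := hh
  refine ⟨mem_union_right W hhQ, ?_⟩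
  rwa [erase_union_distrib, erase_eq_of_notMem hhW]

theorem sum_card_violators_le (hV : IsViolatorSpace H V) {δ : ℕ}
    (hdim : CombinatorialDimLE H V δ) {W : Finset α} (hW : W ⊆ H) (r : ℕ) :
    ∑ R ∈ H.powersetCard r, ((H \ (W ∪ R)).filter fun h => h ∈ V (W ∪ R)).card
      ≤ δ * H.card.choose (r + 1) := by
  have hviolators : ∀ R, ((H \ (W ∪ R)).filter fun h => h ∈ V (W ∪ R))
      = (H \ R).filter fun h => h ∉ W ∧ h ∈ V (W ∪ R) := fun R => by
    ext h
    simp only [mem_filter, mem_sdiff, mem_union, not_or]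
    tauto
  simp_rw [hviolators]
  rw [sum_powersetCard_card_filter_sdiff H r fun R h => h ∉ W ∧ h ∈ V (W ∪ R)]
  calc ∑ Q ∈ H.powersetCard (r + 1), (Q.filter fun h => h ∉ W ∧ h ∈ V (W ∪ Q.erase h)).card
      ≤ ∑ _Q ∈ H.powersetCard (r + 1), δ :=
        sum_le_sum fun Q hQ =>
          hV.card_filter_violator_erase_union_le hdim hW (mem_powersetCard.1 hQ).1
    _ = δ * H.card.choose (r + 1) := by
        rw [sum_const, card_powersetCard, smul_eq_mul, mul_comm]

end IsViolatorSpace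

theorem Nat.cast_choose_succ_mul {K : Type*} [Field K] {n r : ℕ} (hr : r ≤ n) :
    (n.choose (r + 1) : K) * (r + 1) = n.choose r * (n - r) := by
  have := congrArg (Nat.cast : ℕ → K) (Nat.choose_succ_right_eq n r)
  push_cast [Nat.cast_sub hr] at this
  exact this

end

/-- in a violator space `(H, V)` of combinatorial dimension `δ`
(every basis has at most `δ` elements), with `|H| = n`, `W ⊆ H` fixed and `r < n`,
the expected number of violators `h ∈ H \ (W ∪ R)`, `h ∈ V (W ∪ R)`, of `W ∪ R` over
a uniformly random `r`-element subset `R ⊆ H` is at most `δ (n - r) / (r + 1)`. -/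
theorem stmt_16 {α : Type*} [DecidableEq α]
    (H : Finset α) (V : Finset α → Finset α) (δ : ℕ)
    (cons : ∀ G : Finset α, G ⊆ H → G ∩ V G = ∅)
    (loc : ∀ F G : Finset α, F ⊆ G → G ⊆ H → G ∩ V F = ∅ → V G = V F)
    (hdim : ∀ G : Finset α, G ⊆ H → ∀ B : Finset α, B ⊆ G → V B = V G →
      (∀ B' : Finset α, B' ⊂ B → V B' ≠ V G) → B.card ≤ δ)
    (W : Finset α) (hW : W ⊆ H) (r : ℕ) (hr : r < H.card) :
    (∑ R ∈ H.powersetCard r,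
        (((H \ (W ∪ R)).filter fun h => h ∈ V (W ∪ R)).card : ℚ)) /
      (H.card.choose r)
    ≤ (δ : ℚ) * ((H.card : ℚ) - r) / ((r : ℚ) + 1) := by
  have hsum : (∑ R ∈ H.powersetCard r,
      (((H \ (W ∪ R)).filter fun h => h ∈ V (W ∪ R)).card : ℚ)) ≤ δ * H.card.choose (r + 1) := by
    exact_mod_cast (IsViolatorSpace.mk cons loc).sum_card_violators_le hdim hW r
  have hchoose : (0 : ℚ) < H.card.choose r := by exact_mod_cast Nat.choose_pos hr.le
  rw [div_le_div_iff₀ hchoose (by positivity)]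
  calc _ ≤ (δ * H.card.choose (r + 1) : ℚ) * (r + 1) := by gcongr
    _ = δ * (H.card - r) * H.card.choose r := by
        rw [mul_assoc, Nat.cast_choose_succ_mul hr.le]
        ring
end

section
/- In the violator space (H, V) arising from a unique sink orientation of a δ-dimensional grid, the combinatorial dimension is at most δ, and for every Π-valid G ⊆ H, the vertex sink(G) is the unique basis of G. -/
/-!
A basis `B` of a Π-valid `G` must itself be Π-valid: a block missed by `B` would lie in
`V B = V G = s (sink G)`, which avoids `G`. Then `sink B` is a vertex of `G` whose outmap avoids
`G`, so `sink B = sink G ⊆ B` by uniqueness of the sink, and minimality forces `B = sink G`,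
a set with one element per block. If `G` is not Π-valid, neither is `B`, and `V B` only records
which blocks `B` misses; this does not change when a second element of a block is dropped, so
a basis meets every block at most once.
-/

open Finset

section

open Function

variable {α ι : Type*}

def IsBasis (V : Finset α → Finset α) (G B : Finset α) : Prop :=
  B ⊆ G ∧ V B = V G ∧ ∀ B' ⊂ B, V B' ≠ V G

variable [DecidableEq α]

def IsPiValid (P : ι → Finset α) (G : Finset α) : Prop := ∀ i, (G ∩ P i).Nonempty

def IsVertex (P : ι → Finset α) (J : Finset α) : Prop := ∀ i, (J ∩ P i).card = 1

theorem IsVertex.isPiValid {P : ι → Finset α} {J : Finset α} (hJ : IsVertex P J) :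
    IsPiValid P J :=
  fun i => card_pos.mp (by rw [hJ i]; exact one_pos)

theorem IsPiValid.mono {P : ι → Finset α} {B G : Finset α} (hB : IsPiValid P B)
    (hBG : B ⊆ G) : IsPiValid P G :=
  fun i => (hB i).mono (inter_subset_inter hBG Subset.rfl)

def missingBlocks [Fintype ι] (P : ι → Finset α) (G : Finset α) : Finset α :=
  univ.biUnion fun i => if G ∩ P i = ∅ then P i else ∅

theorem card_le_card_of_forall_card_inter_le_one [Fintype ι] {P : ι → Finset α}
    {B : Finset α} (hcov : ∀ x ∈ B, ∃ i, x ∈ P i) (hB : ∀ i, (B ∩ P i).card ≤ 1) :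
    B.card ≤ Fintype.card ι :=
  calc B.card ≤ (univ.biUnion fun i => B ∩ P i).card := card_le_card fun x hx => by
          obtain ⟨i, hi⟩ := hcov x hx
          exact mem_biUnion.mpr ⟨i, mem_univ i, mem_inter.mpr ⟨hx, hi⟩⟩
    _ ≤ ∑ i, (B ∩ P i).card := card_biUnion_le
    _ ≤ ∑ _i : ι, 1 := sum_le_sum fun i _ => hB i
    _ = Fintype.card ι := by simp

theorem missingBlocks_erase [Fintype ι] {P : ι → Finset α} (hdisj : Pairwise (Disjoint on P))
    {B : Finset α} {i : ι} {x y : α} (hx : x ∈ B ∩ P i) (hy : y ∈ B ∩ P i) (hxy : x ≠ y) :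
    missingBlocks P (B.erase x) = missingBlocks P B := by
  refine biUnion_congr rfl fun j _ => ?_
  have hmiss : B.erase x ∩ P j = ∅ ↔ B ∩ P j = ∅ := by
    rw [erase_inter]
    by_cases hji : j = i
    · subst hji
      exact iff_of_false (ne_empty_of_mem (mem_erase.mpr ⟨hxy.symm, hy⟩)) (ne_empty_of_mem hy)
    · rw [erase_eq_of_notMem fun h =>
        disjoint_left.mp (hdisj hji) (mem_inter.mp h).2 (mem_inter.mp hx).2]
  exact if_congr hmiss rfl rfl

theorem exists_missingBlocks_erase_eq [Fintype ι] {P : ι → Finset α}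
    (hdisj : Pairwise (Disjoint on P)) {B : Finset α} (hcov : ∀ x ∈ B, ∃ i, x ∈ P i)
    (hB : Fintype.card ι < B.card) :
    ∃ x ∈ B, missingBlocks P (B.erase x) = missingBlocks P B := by
  obtain ⟨i, hi⟩ : ∃ i, 1 < (B ∩ P i).card := by
    by_contra! h
    exact hB.not_ge (card_le_card_of_forall_card_inter_le_one hcov h)
  obtain ⟨x, hx, y, hy, hxy⟩ := one_lt_card.mp hi
  exact ⟨x, (mem_inter.mp hx).1, missingBlocks_erase hdisj hx hy hxy⟩

structure IsGridUSOViolatorSpace [Fintype ι] (H : Finset α)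
    (P : ι → Finset α) (s sink V : Finset α → Finset α) : Prop where
  sink_spec : ∀ G ⊆ H, IsPiValid P G →
    IsVertex P (sink G) ∧ sink G ⊆ G ∧ s (sink G) ∩ G = ∅
  eq_sink : ∀ G ⊆ H, IsPiValid P G →
    ∀ J, IsVertex P J → J ⊆ G → s J ∩ G = ∅ → J = sink G
  V_of_isPiValid : ∀ G ⊆ H, IsPiValid P G → V G = s (sink G)
  V_of_not_isPiValid : ∀ G ⊆ H, ¬ IsPiValid P G → V G = missingBlocks P G

namespace IsGridUSOViolatorSpace

variable [Fintype ι] {H : Finset α} {P : ι → Finset α}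
  {s sink V : Finset α → Finset α} {G B : Finset α}

theorem sink_sink (hU : IsGridUSOViolatorSpace H P s sink V) (hG : G ⊆ H)
    (hGv : IsPiValid P G) : sink (sink G) = sink G := by
  obtain ⟨hvert, hsub, hout⟩ := hU.sink_spec G hG hGv
  refine (hU.eq_sink _ (hsub.trans hG) hvert.isPiValid _ hvert Subset.rfl ?_).symm
  exact subset_empty.mp (hout ▸ inter_subset_inter Subset.rfl hsub)

theorem V_sink (hU : IsGridUSOViolatorSpace H P s sink V) (hG : G ⊆ H)
    (hGv : IsPiValid P G) : V (sink G) = V G := by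
  obtain ⟨hvert, hsub, -⟩ := hU.sink_spec G hG hGv
  rw [hU.V_of_isPiValid _ (hsub.trans hG) hvert.isPiValid, hU.sink_sink hG hGv,
    hU.V_of_isPiValid G hG hGv]

theorem isPiValid_of_V_eq (hU : IsGridUSOViolatorSpace H P s sink V) (hG : G ⊆ H)
    (hGv : IsPiValid P G) (hBG : B ⊆ G) (hV : V B = V G) : IsPiValid P B := by
  by_contra hBv
  obtain ⟨i, hi⟩ : ∃ i, B ∩ P i = ∅ := by
    simpa [IsPiValid, not_nonempty_iff_eq_empty] using hBv
  obtain ⟨x, hx⟩ := hGv i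
  obtain ⟨hxG, hxP⟩ := mem_inter.mp hx
  have hxV : x ∈ V G := by
    rw [← hV, hU.V_of_not_isPiValid B (hBG.trans hG) hBv]
    exact mem_biUnion.mpr ⟨i, mem_univ i, by rwa [if_pos hi]⟩
  rw [hU.V_of_isPiValid G hG hGv] at hxV
  have hout := (hU.sink_spec G hG hGv).2.2
  exact notMem_empty x (hout ▸ mem_inter.mpr ⟨hxV, hxG⟩)

theorem sink_subset_of_V_eq (hU : IsGridUSOViolatorSpace H P s sink V) (hG : G ⊆ H)
    (hGv : IsPiValid P G) (hBG : B ⊆ G) (hV : V B = V G) : sink G ⊆ B := by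
  have hBv := hU.isPiValid_of_V_eq hG hGv hBG hV
  obtain ⟨hvert, hsub, -⟩ := hU.sink_spec B (hBG.trans hG) hBv
  have hs : s (sink B) = s (sink G) := by
    rw [← hU.V_of_isPiValid B (hBG.trans hG) hBv, hV, hU.V_of_isPiValid G hG hGv]
  have hsinkB : sink B = sink G :=
    hU.eq_sink G hG hGv _ hvert (hsub.trans hBG) (hs ▸ (hU.sink_spec G hG hGv).2.2)
  exact hsinkB ▸ hsub

theorem isBasis_sink (hU : IsGridUSOViolatorSpace H P s sink V) (hG : G ⊆ H)
    (hGv : IsPiValid P G) : IsBasis V G (sink G) :=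
  have hsub := (hU.sink_spec G hG hGv).2.1
  ⟨hsub, hU.V_sink hG hGv, fun _ hB' hV =>
    hB'.not_subset (hU.sink_subset_of_V_eq hG hGv (hB'.subset.trans hsub) hV)⟩

theorem eq_sink_of_isBasis (hU : IsGridUSOViolatorSpace H P s sink V) (hG : G ⊆ H)
    (hGv : IsPiValid P G) (hB : IsBasis V G B) : B = sink G := by
  obtain ⟨hBG, hV, hmin⟩ := hB
  have hsub := hU.sink_subset_of_V_eq hG hGv hBG hV
  by_contra hne
  exact hmin _ (hsub.ssubset_of_ne (Ne.symm hne)) (hU.V_sink hG hGv)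

theorem card_le_of_isBasis (hU : IsGridUSOViolatorSpace H P s sink V)
    (hdisj : Pairwise (Disjoint on P)) (hcov : ∀ h ∈ H, ∃ i, h ∈ P i) (hG : G ⊆ H)
    (hB : IsBasis V G B) : B.card ≤ Fintype.card ι := by
  by_cases hGv : IsPiValid P G
  · obtain ⟨hvert, hsub, -⟩ := hU.sink_spec G hG hGv
    rw [hU.eq_sink_of_isBasis hG hGv hB]
    exact card_le_card_of_forall_card_inter_le_one (fun x hx => hcov x (hG (hsub hx)))
      fun i => (hvert i).le
  · have hBH := hB.1.trans hG
    obtain ⟨hBG, hV, hmin⟩ := hB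
    by_contra! hcard
    obtain ⟨x, hx, hmiss⟩ := exists_missingBlocks_erase_eq hdisj (fun y hy => hcov y (hBH hy)) hcard
    have hBv : ¬ IsPiValid P B := fun h => hGv (h.mono hBG)
    refine hmin _ (erase_ssubset hx) ?_
    rw [hU.V_of_not_isPiValid _ ((erase_subset x B).trans hBH)
      fun h => hBv (h.mono (erase_subset x B)), hmiss, ← hU.V_of_not_isPiValid B hBH hBv, hV]

end IsGridUSOViolatorSpace

end

theorem stmt_19_general {α : Type*} [DecidableEq α] {δ : ℕ}
    (H : Finset α) (P : Fin δ → Finset α)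
    (hPdisj : ∀ i j, i ≠ j → Disjoint (P i) (P j))
    (hPcov : ∀ h ∈ H, ∃ i, h ∈ P i)
    (s : Finset α → Finset α) (sink : Finset α → Finset α)
    (hsink : ∀ G : Finset α, G ⊆ H → (∀ i, (G ∩ P i).Nonempty) →
      (∀ i, (sink G ∩ P i).card = 1) ∧ sink G ⊆ G ∧ s (sink G) ∩ G = ∅)
    (huniq : ∀ G : Finset α, G ⊆ H → (∀ i, (G ∩ P i).Nonempty) →
      ∀ J : Finset α, (∀ i, (J ∩ P i).card = 1) → J ⊆ G → s J ∩ G = ∅ → J = sink G)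
    (V : Finset α → Finset α)
    (hV1 : ∀ G : Finset α, G ⊆ H → (∀ i, (G ∩ P i).Nonempty) → V G = s (sink G))
    (hV2 : ∀ G : Finset α, G ⊆ H → ¬ (∀ i, (G ∩ P i).Nonempty) →
      V G = Finset.univ.biUnion fun i => if G ∩ P i = ∅ then P i else ∅) :
    (∀ G : Finset α, G ⊆ H → ∀ B : Finset α, B ⊆ G → V B = V G →
      (∀ B' : Finset α, B' ⊂ B → V B' ≠ V G) → B.card ≤ δ) ∧
    (∀ G : Finset α, G ⊆ H → (∀ i, (G ∩ P i).Nonempty) →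
      (sink G ⊆ G ∧ V (sink G) = V G ∧
        (∀ B' : Finset α, B' ⊂ sink G → V B' ≠ V G)) ∧
      (∀ B : Finset α, B ⊆ G → V B = V G →
        (∀ B' : Finset α, B' ⊂ B → V B' ≠ V G) → B = sink G)) := by
  have hU : IsGridUSOViolatorSpace H P s sink V := ⟨hsink, huniq, hV1, hV2⟩
  refine ⟨fun G hG B hBG hV hmin => ?_, fun G hG hGv =>
    ⟨hU.isBasis_sink hG hGv, fun B hBG hV hmin => hU.eq_sink_of_isBasis hG hGv ⟨hBG, hV, hmin⟩⟩⟩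
  simpa using hU.card_le_of_isBasis (fun i j => hPdisj i j) hPcov hG ⟨hBG, hV, hmin⟩

/-- in the violator space `(H, V)` arising from a unique sink orientation
of a `δ`-dimensional grid (setup as in the grid USO construction: blocks `P i`, outmap
`s`, unique subgrid sinks `sink G`, `V G = s (sink G)` for Π-valid `G` and `V G` the
union of blocks disjoint from `G` otherwise), the combinatorial dimension is at most
`δ` (every basis has at most `δ` elements), and for every Π-valid `G ⊆ H` the vertex
`sink G` is the unique basis of `G`. -/
theorem stmt_19 {α : Type*} [DecidableEq α] {δ : ℕ}
    (H : Finset α) (P : Fin δ → Finset α)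
    (hPsub : ∀ i, P i ⊆ H)
    (hPne : ∀ i, (P i).Nonempty)
    (hPdisj : ∀ i j, i ≠ j → Disjoint (P i) (P j))
    (hPcov : ∀ h ∈ H, ∃ i, h ∈ P i)
    (s : Finset α → Finset α) (sink : Finset α → Finset α)
    (hs : ∀ J : Finset α, (∀ i, (J ∩ P i).card = 1) → s J ⊆ H \ J)
    (hsink : ∀ G : Finset α, G ⊆ H → (∀ i, (G ∩ P i).Nonempty) →
      (∀ i, (sink G ∩ P i).card = 1) ∧ sink G ⊆ G ∧ s (sink G) ∩ G = ∅)
    (huniq : ∀ G : Finset α, G ⊆ H → (∀ i, (G ∩ P i).Nonempty) →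
      ∀ J : Finset α, (∀ i, (J ∩ P i).card = 1) → J ⊆ G → s J ∩ G = ∅ → J = sink G)
    (V : Finset α → Finset α)
    (hV1 : ∀ G : Finset α, G ⊆ H → (∀ i, (G ∩ P i).Nonempty) → V G = s (sink G))
    (hV2 : ∀ G : Finset α, G ⊆ H → ¬ (∀ i, (G ∩ P i).Nonempty) →
      V G = Finset.univ.biUnion fun i => if G ∩ P i = ∅ then P i else ∅) :
    (∀ G : Finset α, G ⊆ H → ∀ B : Finset α, B ⊆ G → V B = V G →
      (∀ B' : Finset α, B' ⊂ B → V B' ≠ V G) → B.card ≤ δ) ∧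
    (∀ G : Finset α, G ⊆ H → (∀ i, (G ∩ P i).Nonempty) →
      (sink G ⊆ G ∧ V (sink G) = V G ∧
        (∀ B' : Finset α, B' ⊂ sink G → V B' ≠ V G)) ∧
      (∀ B : Finset α, B ⊆ G → V B = V G →
        (∀ B' : Finset α, B' ⊂ B → V B' ≠ V G) → B = sink G)) :=
  stmt_19_general H P hPdisj hPcov s sink hsink huniq V hV1 hV2
end
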